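/- For coprime positive integers a, b and 0 ≤ i ≤ a, the large and small rational Schröder numbers satisfy Sch(a,b,i) = sch(a,b,i) + sch(a,b,i−1), with sch(a,b,−1)=0. -/

import Mathlib

/-- Steps of a (Schröder) lattice path: north, east, diagonal. -/
inductive Step : Type
  | N | E | D
deriving DecidableEq, Repr

/-- Total horizontal displacement of a path. -/
def eLen (p : List Step) : ℕ := p.count Step.E + p.count Step.D

/-- Total vertical displacement of a path. -/
def nLen (p : List Step) : ℕ := p.count Step.N + p.count Step.D

/-- A lattice path uses only `N` and `E` steps. -/
def IsLatticePath (ν : List Step) : Prop := Step.D ∉ ν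

/-- `colVal p x` is twice the starting height of the step of `p` crossing the vertical
strip between abscissas `x` and `x+1`, plus `1` if that step is diagonal.  Comparing these
values columnwise is equivalent to comparing the heights of the paths over each strip. -/
def colVal : List Step → ℕ → ℕ
  | [], _ => 0
  | Step.N :: p, x => colVal p x + 2
  | Step.E :: _, 0 => 0
  | Step.E :: p, x+1 => colVal p x
  | Step.D :: _, 0 => 1
  | Step.D :: p, x+1 => colVal p x + 2

/-- `π` stays weakly above `ρ` (same endpoints intended). -/
def WeaklyAbove (π ρ : List Step) : Prop := ∀ x, colVal ρ x ≤ colVal π x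

/-- Replace every peak (consecutive `NE`) of a path by a diagonal step; applied to `ν`
this gives the path `μ` of the large ν-Schröder path definition. -/
def cutPeaks : List Step → List Step
  | [] => []
  | Step.N :: Step.E :: p => Step.D :: cutPeaks p
  | s :: p => s :: cutPeaks p

/-- A ν-Dyck path: an `N,E` path with the same endpoints as `ν` staying weakly above `ν`. -/
def IsNuDyck (ν π : List Step) : Prop :=
  Step.D ∉ π ∧ eLen π = eLen ν ∧ nLen π = nLen ν ∧ WeaklyAbove π ν

/-- A (small) ν-Schröder path: an `N,E,D` path with the same endpoints as `ν` staying weakly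
above `ν` (this automatically forbids diagonal steps on the ν-diagonal). -/
def IsSmallSchroder (ν π : List Step) : Prop :=
  eLen π = eLen ν ∧ nLen π = nLen ν ∧ WeaklyAbove π ν

/-- A large ν-Schröder path: an `N,E,D` path with the same endpoints as `ν` staying weakly
above the path obtained from `ν` by replacing each peak by a diagonal step. -/
def IsLargeSchroder (ν π : List Step) : Prop :=
  eLen π = eLen ν ∧ nLen π = nLen ν ∧ WeaklyAbove π (cutPeaks ν)

/-- Number of peaks (consecutive `NE` pairs). -/
def peaks (p : List Step) : ℕ := (p.zip p.tail).count (Step.N, Step.E)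

/-- Number of valleys (consecutive `EN` pairs). -/
def valleys (p : List Step) : ℕ := (p.zip p.tail).count (Step.E, Step.N)

/-- Lattice points at which valleys of a path occur (starting the path at `(x,y)`). -/
def valleyPts : List Step → ℕ → ℕ → List (ℕ × ℕ)
  | [], _, _ => []
  | Step.E :: p, x, y =>
      (if p.head? = some Step.N then [(x+1, y)] else []) ++ valleyPts p (x+1) y
  | Step.N :: p, x, y => valleyPts p x (y+1)
  | Step.D :: p, x, y => valleyPts p (x+1) (y+1)

/-- Lattice points at which high peaks (peaks strictly above `ν`) of a path occur. -/
def highPeakPts (ν : List Step) : List Step → ℕ → ℕ → List (ℕ × ℕ)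
  | [], _, _ => []
  | Step.N :: p, x, y =>
      (if p.head? = some Step.E ∧ colVal ν x < 2*(y+1) then [(x, y+1)] else []) ++
        highPeakPts ν p x (y+1)
  | Step.E :: p, x, y => highPeakPts ν p (x+1) y
  | Step.D :: p, x, y => highPeakPts ν p (x+1) (y+1)

/-- Number of high peaks of `π` relative to `ν`. -/
def highPeaks (ν π : List Step) : ℕ := (highPeakPts ν π 0 0).length

/-- j-th ν-Narayana number: number of ν-Dyck paths with exactly `j` valleys. -/
noncomputable def Nar (ν : List Step) (j : ℕ) : ℕ :=
  Nat.card {π : List Step // IsNuDyck ν π ∧ valleys π = j}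

/-- Number of small ν-Schröder paths with exactly `i` diagonal steps. -/
noncomputable def schNum (ν : List Step) (i : ℕ) : ℕ :=
  Nat.card {π : List Step // IsSmallSchroder ν π ∧ π.count Step.D = i}

/-- `lowH ν x` is the lowest height of a point of `ν` at abscissa `x`. -/
def lowH : List Step → ℕ → ℕ
  | _, 0 => 0
  | [], _+1 => 0
  | Step.N :: p, x+1 => lowH p (x+1) + 1
  | Step.E :: p, x+1 => lowH p x
  | Step.D :: p, x+1 => lowH p x + 1

/-- The lowest lattice path from `(0,0)` to `(b,a)` weakly above the line segment
from `(0,0)` to `(b,a)`. -/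
def nuAB (a b : ℕ) : List Step :=
  (List.range b).flatMap (fun x =>
    List.replicate (((x+1)*a + b - 1)/b - (x*a + b - 1)/b) Step.N ++ [Step.E])

/-- Number of large rational `(a,b)`-Schröder paths with `i` diagonal steps. -/
noncomputable def largeCount (a b i : ℕ) : ℕ :=
  Nat.card {π : List Step // IsLargeSchroder (nuAB a b) π ∧ π.count Step.D = i}

/-- Number of small rational `(a,b)`-Schröder paths with `i` diagonal steps. -/
noncomputable def smallCount (a b i : ℕ) : ℕ :=
  Nat.card {π : List Step // IsSmallSchroder (nuAB a b) π ∧ π.count Step.D = i}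

/-- Binomial coefficient with an integer lower entry (zero when negative). -/
def chooseZ (n : ℕ) (k : ℤ) : ℕ := if 0 ≤ k then n.choose k.toNat else 0

/-- The region weakly above `ν` in the rectangle `[0,b] × [0,a]`. -/
def InRegion (ν : List Step) (p : ℕ × ℕ) : Prop :=
  p.1 ≤ eLen ν ∧ p.2 ≤ nLen ν ∧ lowH ν p.1 ≤ p.2

/-- Two points of the region are ν-incompatible if one is strictly southwest of the other and
the rectangle they span lies in the region (equivalently its bottom-right corner does). -/
def Incompat (ν : List Step) (p q : ℕ × ℕ) : Prop :=
  ((p.1 < q.1 ∧ p.2 < q.2) ∨ (q.1 < p.1 ∧ q.2 < p.2)) ∧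
    InRegion ν (max p.1 q.1, min p.2 q.2)

/-- A ν-binary tree: a maximal set of pairwise ν-compatible points of the region. -/
def IsBinaryTree (ν : List Step) (T : Finset (ℕ × ℕ)) : Prop :=
  (∀ p ∈ T, InRegion ν p) ∧ (∀ p ∈ T, ∀ q ∈ T, ¬ Incompat ν p q) ∧
    ∀ r, InRegion ν r → (∀ p ∈ T, ¬ Incompat ν r p) → r ∈ T

/-- A ν-Schröder tree: pairwise ν-compatible points of the region containing the root
`(0,a)` and meeting every row and every column. -/
def IsSchroderTree (ν : List Step) (T : Finset (ℕ × ℕ)) : Prop :=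
  (∀ p ∈ T, InRegion ν p) ∧ (∀ p ∈ T, ∀ q ∈ T, ¬ Incompat ν p q) ∧
    (0, nLen ν) ∈ T ∧ (∀ y ≤ nLen ν, ∃ p ∈ T, p.2 = y) ∧ (∀ x ≤ eLen ν, ∃ p ∈ T, p.1 = x)

/-- One contraction step: delete a node, provided the result is still a ν-Schröder tree. -/
def ContractStep (ν : List Step) (T T' : Finset (ℕ × ℕ)) : Prop :=
  ∃ q ∈ T, T' = T.erase q ∧ IsSchroderTree ν T'

/-- `p` is a leaf of the (plane tree associated to the) node set `T`: no node strictly below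
it in its column and none strictly to its right in its row. -/
def IsLeafIn (T : Finset (ℕ × ℕ)) (p : ℕ × ℕ) : Prop :=
  (∀ q ∈ T, ¬(q.1 = p.1 ∧ q.2 < p.2)) ∧ (∀ q ∈ T, ¬(q.2 = p.2 ∧ p.1 < q.1))

/-- Starting points of vertical runs and ending points of horizontal runs of `ν`. -/
def leafPts (ν : List Step) : Finset (ℕ × ℕ) :=
  (valleyPts ν 0 0).toFinset ∪ (if ν.head? = some Step.N then {((0 : ℕ), (0 : ℕ))} else ∅) ∪
    (if ν.getLast? = some Step.E then {(eLen ν, nLen ν)} else ∅)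

/-- `horizNu ν x y`: maximal number of east steps that can be placed starting at `(x,y)`
before crossing `ν` (staying within the bounding rectangle). -/
def horizNu (ν : List Step) (x y : ℕ) : ℕ :=
  ((Finset.Icc 1 (eLen ν - x)).filter (fun k => lowH ν (x + k) ≤ y)).card

/-- No `N` step of the given path (started at `(x,y)`) has initial point with
`horizNu`-value `h`. -/
def noNAt (ν : List Step) (h : ℕ) : List Step → ℕ → ℕ → Prop
  | [], _, _ => True
  | Step.N :: p, x, y => horizNu ν x y ≠ h ∧ noNAt ν h p x (y+1)
  | Step.E :: p, x, y => noNAt ν h p (x+1) y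
  | Step.D :: p, x, y => noNAt ν h p (x+1) (y+1)

/-- Right contraction: replace a consecutive `EN` pair (a valley) by a `D` step. -/
def RightC (μ lam : List Step) : Prop :=
  ∃ p q, μ = p ++ Step.E :: Step.N :: q ∧ lam = p ++ Step.D :: q

/-- Left contraction: delete an `E` step together with the most recent preceding `N` step
whose initial point has the same `horizNu` statistic as the initial point of the `E` step,
shift the intermediate subpath, and place a `D` step at the initial point of the `N` step. -/
def LeftC (ν μ lam : List Step) : Prop :=
  ∃ p m q, μ = p ++ Step.N :: (m ++ Step.E :: q) ∧ lam = p ++ Step.D :: (m ++ q) ∧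
    horizNu ν (eLen p) (nLen p)
      = horizNu ν (eLen (p ++ Step.N :: m)) (nLen (p ++ Step.N :: m)) ∧
    noNAt ν (horizNu ν (eLen (p ++ Step.N :: m)) (nLen (p ++ Step.N :: m)))
      m (eLen p) (nLen p + 1)

/-- Diagonal contraction: delete an `E` step ending at the initial point `r` of a `D` step,
together with the most recent preceding `N` step whose initial point `s` satisfies
`horizNu s = horizNu r`, shift the intermediate subpath, and place a `D` step at `s`. -/
def DiagC (ν μ lam : List Step) : Prop :=
  ∃ p m q, μ = p ++ Step.N :: (m ++ Step.E :: Step.D :: q) ∧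
    lam = p ++ Step.D :: (m ++ Step.D :: q) ∧
    horizNu ν (eLen p) (nLen p)
      = horizNu ν (eLen (p ++ Step.N :: m) + 1) (nLen (p ++ Step.N :: m)) ∧
    noNAt ν (horizNu ν (eLen (p ++ Step.N :: m) + 1) (nLen (p ++ Step.N :: m)))
      m (eLen p) (nLen p + 1)

/-- Cover relation of the contraction poset of ν-Schröder paths. -/
def Covers (ν μ lam : List Step) : Prop :=
  IsSmallSchroder ν μ ∧ IsSmallSchroder ν lam ∧
    (RightC μ lam ∨ LeftC ν μ lam ∨ DiagC ν μ lam)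

/-- The Morse matching: `σ` (having a `D` step preceded by no valley) is matched with the
path `π` obtained by replacing the first such `D` step by `EN`. -/
def MorseM (ν : List Step) : Set (List Step × List Step) :=
  { z | ∃ p q, Step.D ∉ p ∧ valleys p = 0 ∧
      z.2 = p ++ Step.D :: q ∧ z.1 = p ++ Step.E :: Step.N :: q ∧ IsSmallSchroder ν z.2 }

/-- Twice the area between a small ν-Schröder path and `ν`. -/
def area2 (ν π : List Step) : ℕ :=
  ∑ x ∈ Finset.range (eLen ν), (colVal π x - colVal ν x)

/-- An `(I,J̄)`-forest: increasing, non-crossing arcs. -/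
def IsIJForest (I J : Finset ℕ) (F : Finset (ℕ × ℕ)) : Prop :=
  (∀ a ∈ F, a.1 ∈ I ∧ a.2 ∈ J ∧ a.1 < a.2) ∧
    (∀ a ∈ F, ∀ a' ∈ F, ¬(a.1 < a'.1 ∧ a'.1 < a.2 ∧ a.2 < a'.2))

/-- A covering `(I,J̄)`-forest: contains the arc `(1,n)` and has no isolated node. -/
def IsCoveringForest (n : ℕ) (I J : Finset ℕ) (F : Finset (ℕ × ℕ)) : Prop :=
  IsIJForest I J F ∧ (1, n) ∈ F ∧
    (∀ i ∈ I, ∃ a ∈ F, a.1 = i) ∧ (∀ j ∈ J, ∃ a ∈ F, a.2 = j)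

/-- The lattice path read off from the interleaving of `I` and `J̄` (elements `2,…,n-1`,
`E` for elements of `I`, `N` for the others). -/
def nuOf (n : ℕ) (I : Finset ℕ) : List Step :=
  (List.range' 2 (n - 2)).map (fun k => if k ∈ I then Step.E else Step.N)

/-! A large path that is not small dips below `ν` only under peaks of `ν`, by half a unit, so
its last dip is a diagonal step: the path is `μ₁ D μ₂`. Then `N μ₁ E μ₂` is a small path whose
first contact with `ν` is that `E` step, and conversely lowering a small path `N μ₁ E μ₂` at its
first contact with `ν` gives a large path that is not small. This bijection adds one diagonal
step, and the small paths are exactly the large ones weakly above `ν`. -/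

lemma Nat.card_eq_of_biTotal_of_biUnique {α β : Type*} {R : α → β → Prop}
    (ht : Relator.BiTotal R) (hu : Relator.BiUnique R) : Nat.card α = Nat.card β := by
  choose f hf using ht.1
  refine Nat.card_congr (Equiv.ofBijective f ⟨fun a a' h => hu.1 (hf a) (h ▸ hf a'), fun b => ?_⟩)
  obtain ⟨a, ha⟩ := ht.2 b
  exact ⟨a, hu.2 (hf a) ha⟩

lemma Nat.card_subtype_eq_card_and_add_card_and_not {α : Type*} (P Q : α → Prop)
    (h : {a | P a}.Finite) :
    Nat.card {a // P a} = Nat.card {a // P a ∧ Q a} + Nat.card {a // P a ∧ ¬ Q a} :=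
  (Set.ncard_inter_add_ncard_sdiff_eq_ncard {a | P a} {a | Q a} h).symm

instance : Fintype Step :=
  ⟨⟨{Step.N, Step.E, Step.D}, by decide⟩, fun s => by cases s <;> decide⟩

attribute [local simp] colVal

@[simp] lemma eLen_nil : eLen [] = 0 := rfl
@[simp] lemma eLen_cons_N (p : List Step) : eLen (Step.N :: p) = eLen p := by simp [eLen]
@[simp] lemma eLen_cons_E (p : List Step) : eLen (Step.E :: p) = eLen p + 1 := by
  simp [eLen]; omega
@[simp] lemma eLen_cons_D (p : List Step) : eLen (Step.D :: p) = eLen p + 1 := by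
  simp [eLen]; omega
@[simp] lemma eLen_append (p q : List Step) : eLen (p ++ q) = eLen p + eLen q := by
  simp [eLen]; omega

@[simp] lemma nLen_nil : nLen [] = 0 := rfl
@[simp] lemma nLen_cons_N (p : List Step) : nLen (Step.N :: p) = nLen p + 1 := by
  simp [nLen]; omega
@[simp] lemma nLen_cons_E (p : List Step) : nLen (Step.E :: p) = nLen p := by simp [nLen]
@[simp] lemma nLen_cons_D (p : List Step) : nLen (Step.D :: p) = nLen p + 1 := by
  simp [nLen]; omega
@[simp] lemma nLen_append (p q : List Step) : nLen (p ++ q) = nLen p + nLen q := by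
  simp [nLen]; omega

lemma length_le_eLen_add_nLen (p : List Step) : p.length ≤ eLen p + nLen p := by
  induction p with
  | nil => simp
  | cons s p ih => cases s <;> simp <;> omega

lemma finite_setOf_eLen_nLen (e n : ℕ) :
    {p : List Step | eLen p = e ∧ nLen p = n}.Finite :=
  (List.finite_length_le Step (e + n)).subset fun p ⟨he, hn⟩ =>
    he ▸ hn ▸ length_le_eLen_add_nLen p

lemma colVal_append_of_le {u : List Step} (v : List Step) {x : ℕ} (h : eLen u ≤ x) :
    colVal (u ++ v) x = 2 * nLen u + colVal v (x - eLen u) := by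
  induction u generalizing x with
  | nil => simp
  | cons s u ih =>
    cases s with
    | N => simp [ih (by simpa using h)]; ring
    | E | D =>
      obtain ⟨y, rfl⟩ : ∃ y, x = y + 1 := ⟨x - 1, by simp at h; omega⟩
      simp [ih (show eLen u ≤ y by simp at h; omega)] <;> ring

lemma colVal_append_of_lt {u : List Step} (v : List Step) {x : ℕ} (h : x < eLen u) :
    colVal (u ++ v) x = colVal u x := by
  induction u generalizing x with
  | nil => simp at h
  | cons s u ih =>
    cases s with
    | N => simp [ih (by simpa using h)]
    | E | D =>
      cases x with
      | zero => simp
      | succ y => simp [ih (show y < eLen u by simp at h; omega)]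

lemma colVal_append_cons_eLen (u w : List Step) (c : Step) :
    colVal (u ++ c :: w) (eLen u) = 2 * nLen u + colVal (c :: w) 0 := by
  simp [colVal_append_of_le _ le_rfl]

lemma colVal_of_eLen_le {p : List Step} {x : ℕ} (h : eLen p ≤ x) :
    colVal p x = 2 * nLen p := by
  simpa using colVal_append_of_le [] h

lemma colVal_monotone (p : List Step) : Monotone (colVal p) := by
  refine monotone_nat_of_le_succ fun x => ?_
  induction p generalizing x with
  | nil => simp
  | cons s p ih =>
    cases s with
    | N => simpa using ih x
    | E | D =>
      cases x with
      | zero => simp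
      | succ y => simpa using ih y

lemma colVal_le_two_mul_nLen (p : List Step) (x : ℕ) : colVal p x ≤ 2 * nLen p :=
  (colVal_monotone p (le_max_left x (eLen p))).trans (colVal_of_eLen_le (le_max_right _ _)).le

lemma colVal_lt_of_odd {p : List Step} {x : ℕ} (h : Odd (colVal p (x + 1))) :
    colVal p x < colVal p (x + 1) := by
  induction p generalizing x with
  | nil => simp at h
  | cons s p ih =>
    cases s with
    | N =>
      simp only [colVal] at h ⊢
      have := ih (x := x) (by simpa [Nat.odd_add] using h)
      omega
    | E =>
      cases x with
      | zero => simpa using h.pos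
      | succ y => simpa using ih (x := y) (by simpa using h)
    | D =>
      cases x with
      | zero => simp
      | succ y =>
        simp only [colVal] at h ⊢
        have := ih (x := y) (by simpa [Nat.odd_add] using h)
        omega

lemma IsLatticePath.of_cons {s : Step} {p : List Step} (h : IsLatticePath (s :: p)) :
    IsLatticePath p :=
  fun hD => h (List.mem_cons_of_mem s hD)

lemma IsLatticePath.even_colVal {p : List Step} (hp : IsLatticePath p) (x : ℕ) :
    Even (colVal p x) := by
  induction p generalizing x with
  | nil => simp
  | cons s p ih =>
    cases s with
    | N => simpa using (ih hp.of_cons x).add even_two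
    | E =>
      cases x with
      | zero => simp
      | succ y => simpa using ih hp.of_cons y
    | D => exact absurd List.mem_cons_self hp

lemma two_le_colVal {p : List Step} (h : p.head? = some Step.N) (x : ℕ) : 2 ≤ colVal p x := by
  obtain ⟨t, rfl⟩ := List.head?_eq_some_iff.1 h
  simp

lemma exists_eq_N_cons_of_two_le_colVal {p : List Step} (h : 2 ≤ colVal p 0) :
    ∃ t, p = Step.N :: t := by
  rcases p with _ | ⟨_ | _ | _, t⟩ <;> simp at h ⊢

lemma eLen_pos_of_getLast? {p : List Step} (h : p.getLast? = some Step.E) : 0 < eLen p := by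
  obtain ⟨t, rfl⟩ := List.getLast?_eq_some_iff.1 h
  simp

lemma colVal_eLen_sub_one {p : List Step} (h : p.getLast? = some Step.E) :
    colVal p (eLen p - 1) = 2 * nLen p := by
  obtain ⟨t, rfl⟩ := List.getLast?_eq_some_iff.1 h
  simpa using colVal_append_cons_eLen t [] Step.E

lemma cutPeaks_cons_of {s : Step} {p : List Step}
    (hne : ∀ q, s = Step.N → p = Step.E :: q → False) :
    cutPeaks (s :: p) = s :: cutPeaks p := by
  cases s <;> rcases p with _ | ⟨t, q⟩ <;> first
    | rfl
    | (cases t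
       · rfl
       · exact absurd rfl (fun h => hne q h rfl)
       · rfl)

lemma colVal_cutPeaks_le_and_le (p : List Step) (x : ℕ) :
    colVal (cutPeaks p) x ≤ colVal p x ∧ colVal p x ≤ colVal (cutPeaks p) x + 1 := by
  induction p using cutPeaks.induct generalizing x with
  | case1 => simp [cutPeaks]
  | case2 p ih =>
    rw [show cutPeaks (Step.N :: Step.E :: p) = Step.D :: cutPeaks p from rfl]
    cases x with
    | zero => simp
    | succ y => simpa using ih y
  | case3 s p hne ih =>
    rw [cutPeaks_cons_of hne]
    cases s with
    | N => have := ih x; simp only [colVal]; omega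
    | E | D =>
      cases x with
      | zero => simp
      | succ y => have := ih y; simp only [colVal]; omega

/-- `hpos` and `hrise` say that the step of `p` before column `x` is an `N` step, so that `x`
lies under a peak of `p`. -/
lemma IsLatticePath.colVal_cutPeaks_lt {p : List Step} (hp : IsLatticePath p) {x : ℕ}
    (hx : x < eLen p) (hpos : 0 < colVal p x)
    (hrise : ∀ y, x = y + 1 → colVal p y < colVal p x) :
    colVal (cutPeaks p) x < colVal p x := by
  induction p using cutPeaks.induct generalizing x with
  | case1 => simp at hx
  | case2 p ih =>
    rw [show cutPeaks (Step.N :: Step.E :: p) = Step.D :: cutPeaks p from rfl]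
    cases x with
    | zero => simp
    | succ y =>
      have hrise' := hrise y rfl
      simp only [colVal] at hrise' ⊢
      have := ih hp.of_cons.of_cons (x := y) (by simpa using hx)
        (by cases y <;> simp at hrise' ⊢ <;> omega)
        (by rintro z rfl; simp only [colVal] at hrise'; omega)
      omega
  | case3 s p hne ih =>
    rw [cutPeaks_cons_of hne]
    cases s with
    | N =>
      have hpos' : 0 < colVal p x := by
        rcases x with _ | y
        · rcases p with _ | ⟨_ | _ | _, q⟩
          · simp at hx
          · simp
          · exact (hne q rfl rfl).elim
          · exact absurd (by simp) hp
        · have := hrise y rfl; simp only [colVal] at this; omega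
      have := ih hp.of_cons (by simpa using hx) hpos'
        (fun y hy => by have := hrise y hy; simp only [colVal] at this; omega)
      simp only [colVal]; omega
    | E =>
      rcases x with _ | y
      · simp at hpos
      · have hrise' := hrise y rfl
        simp only [colVal] at hrise' ⊢
        exact ih hp.of_cons (by simp at hx; omega) (by omega)
          (by rintro z rfl; simpa using hrise')
    | D => exact absurd List.mem_cons_self hp

lemma exists_eq_append_cons_of_lt_eLen {p : List Step} {x : ℕ} (h : x < eLen p) :
    ∃ u c w, p = u ++ c :: w ∧ eLen u = x ∧ c ≠ Step.N := by
  induction p generalizing x with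
  | nil => simp at h
  | cons s p ih =>
    cases s with
    | N =>
      obtain ⟨u, c, w, rfl, rfl, hc⟩ := ih (by simpa using h)
      exact ⟨Step.N :: u, c, w, rfl, by simp, hc⟩
    | E | D =>
      rcases x with _ | y
      · exact ⟨[], _, p, rfl, rfl, by simp⟩
      · obtain ⟨u, c, w, rfl, rfl, hc⟩ := ih (x := y) (by simp at h; omega)
        exact ⟨_ :: u, c, w, rfl, by simp, hc⟩

lemma eq_of_append_cons_eq_append_cons {u u' w w' : List Step} {c c' : Step}
    (h : u ++ c :: w = u' ++ c' :: w') (he : eLen u = eLen u') (hc : c ≠ Step.N)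
    (hc' : c' ≠ Step.N) : u = u' ∧ w = w' := by
  induction u generalizing u' with
  | nil =>
    rcases u' with _ | ⟨s, u'⟩
    · simp_all
    · obtain ⟨rfl, rfl⟩ := List.cons.inj h
      cases c <;> simp_all
  | cons s u ih =>
    rcases u' with _ | ⟨s', u'⟩
    · obtain ⟨rfl, rfl⟩ := List.cons.inj h
      cases s <;> simp_all
    · simp only [List.cons_append, List.cons.injEq] at h
      obtain ⟨rfl, h⟩ := h
      obtain ⟨rfl, rfl⟩ := ih h (by cases s <;> simpa using he)
      exact ⟨rfl, rfl⟩

section Surgery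

variable {μ₁ μ₂ : List Step} {x : ℕ}

lemma colVal_raise_of_lt (h : x < eLen μ₁) :
    colVal (Step.N :: (μ₁ ++ Step.E :: μ₂)) x = colVal (μ₁ ++ Step.D :: μ₂) x + 2 := by
  simp [colVal_append_of_lt _ h]

lemma colVal_raise_eLen :
    colVal (Step.N :: (μ₁ ++ Step.E :: μ₂)) (eLen μ₁)
      = colVal (μ₁ ++ Step.D :: μ₂) (eLen μ₁) + 1 := by
  simp [colVal_append_cons_eLen]

lemma colVal_raise_of_gt (h : eLen μ₁ < x) :
    colVal (Step.N :: (μ₁ ++ Step.E :: μ₂)) x = colVal (μ₁ ++ Step.D :: μ₂) x := by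
  obtain ⟨y, hy⟩ : ∃ y, x - eLen μ₁ = y + 1 := ⟨x - eLen μ₁ - 1, by omega⟩
  simp [colVal_append_of_le _ h.le, hy]; ring

end Surgery

/-- Column `eLen μ₁` is at once the first column where `σ` touches `ν` and the last one where
`π` is below `ν`; either description pins down `μ₁`. -/
def LowerAtTouch (ν σ π : List Step) : Prop :=
  ∃ μ₁ μ₂, σ = Step.N :: (μ₁ ++ Step.E :: μ₂) ∧ π = μ₁ ++ Step.D :: μ₂ ∧
    colVal σ (eLen μ₁) = colVal ν (eLen μ₁) ∧ (∀ x < eLen μ₁, colVal ν x < colVal σ x) ∧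
    colVal π (eLen μ₁) < colVal ν (eLen μ₁) ∧ (∀ x, eLen μ₁ < x → colVal ν x ≤ colVal π x)

namespace LowerAtTouch

variable {ν σ π : List Step}

lemma rightUnique (ν : List Step) : Relator.RightUnique (LowerAtTouch ν) := by
  rintro σ π π' ⟨μ₁, μ₂, hσ, rfl, htouch, hbefore, -⟩
    ⟨μ₁', μ₂', hσ', rfl, htouch', hbefore', -⟩
  have he : eLen μ₁ = eLen μ₁' := by
    rcases lt_trichotomy (eLen μ₁) (eLen μ₁') with h | h | h
    · exact absurd htouch (hbefore' _ h).ne'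
    · exact h
    · exact absurd htouch' (hbefore _ h).ne'
  obtain ⟨rfl, rfl⟩ := eq_of_append_cons_eq_append_cons
    (List.cons.inj (hσ.symm.trans hσ')).2 he (by simp) (by simp)
  rfl

lemma leftUnique (ν : List Step) : Relator.LeftUnique (LowerAtTouch ν) := by
  rintro σ σ' π ⟨μ₁, μ₂, rfl, hπ, -, -, hbelow, hafter⟩
    ⟨μ₁', μ₂', rfl, hπ', -, -, hbelow', hafter'⟩
  have he : eLen μ₁ = eLen μ₁' := by
    rcases lt_trichotomy (eLen μ₁) (eLen μ₁') with h | h | h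
    · exact absurd (hafter _ h) hbelow'.not_ge
    · exact h
    · exact absurd (hafter' _ h) hbelow.not_ge
  obtain ⟨rfl, rfl⟩ :=
    eq_of_append_cons_eq_append_cons (hπ.symm.trans hπ') he (by simp) (by simp)
  rfl

lemma eLen_eq (h : LowerAtTouch ν σ π) : eLen π = eLen σ := by
  obtain ⟨μ₁, μ₂, rfl, rfl, -⟩ := h
  simp

lemma nLen_eq (h : LowerAtTouch ν σ π) : nLen π = nLen σ := by
  obtain ⟨μ₁, μ₂, rfl, rfl, -⟩ := h
  simp; omega

lemma count_D (h : LowerAtTouch ν σ π) : π.count Step.D = σ.count Step.D + 1 := by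
  obtain ⟨μ₁, μ₂, rfl, rfl, -⟩ := h
  simp; omega

lemma not_weaklyAbove (h : LowerAtTouch ν σ π) : ¬ WeaklyAbove π ν := by
  obtain ⟨μ₁, μ₂, -, -, -, -, hbelow, -⟩ := h
  exact fun hW => (hW _).not_gt hbelow

end LowerAtTouch

lemma exists_first_touch {ν σ : List Step} (hlast : ν.getLast? = some Step.E)
    (hσ : IsSmallSchroder ν σ) :
    ∃ x < eLen ν, colVal σ x = colVal ν x ∧ ∀ y < x, colVal ν y < colVal σ y := by
  classical
  have hend : colVal σ (eLen ν - 1) = colVal ν (eLen ν - 1) := by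
    have hle := colVal_le_two_mul_nLen σ (eLen ν - 1)
    have hge := hσ.2.2 (eLen ν - 1)
    rw [hσ.2.1] at hle
    rw [colVal_eLen_sub_one hlast] at hge ⊢
    omega
  have hex : ∃ x, colVal σ x = colVal ν x := ⟨_, hend⟩
  refine ⟨Nat.find hex, ?_, Nat.find_spec hex, fun y hy =>
    (hσ.2.2 y).lt_of_ne fun h => Nat.find_min hex hy h.symm⟩
  have := Nat.find_min' hex hend
  have := eLen_pos_of_getLast? hlast
  omega

lemma exists_last_below {ν π : List Step} (he : eLen π = eLen ν) (hn : nLen π = nLen ν)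
    (hπ : ¬ WeaklyAbove π ν) :
    ∃ x < eLen ν, colVal π x < colVal ν x ∧ ∀ y, x < y → colVal ν y ≤ colVal π y := by
  classical
  have hend : ∀ y, eLen ν ≤ y → colVal π y = colVal ν y := fun y hy => by
    rw [colVal_of_eLen_le (he ▸ hy), colVal_of_eLen_le hy, hn]
  obtain ⟨x, hx⟩ : ∃ x, colVal π x < colVal ν x := by simpa [WeaklyAbove] using hπ
  have hxE : x ≤ eLen ν := by
    by_contra h
    have := hend x (by omega)
    omega
  have hx₁ := Nat.findGreatest_spec (P := fun y => colVal π y < colVal ν y) hxE hx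
  refine ⟨_, lt_of_le_of_ne (Nat.findGreatest_le _) fun h => ?_, hx₁, fun y hy => ?_⟩
  · rw [h, hend _ le_rfl] at hx₁
    exact lt_irrefl _ hx₁
  · by_cases hy' : y ≤ eLen ν
    · exact not_lt.1 (Nat.findGreatest_is_greatest (P := fun y => colVal π y < colVal ν y) hy hy')
    · exact (hend y (by omega)).ge

section LatticePath

variable {ν : List Step} (hν : IsLatticePath ν) (hfirst : ν.head? = some Step.N)
  (hlast : ν.getLast? = some Step.E)
include hν

include hfirst in
lemma IsLatticePath.colVal_cutPeaks_lt_of_touch {σ : List Step} {x : ℕ} (hx : x < eLen ν)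
    (htouch : colVal σ x = colVal ν x) (hbefore : ∀ y < x, colVal ν y < colVal σ y) :
    colVal (cutPeaks ν) x < colVal ν x := by
  refine hν.colVal_cutPeaks_lt hx ?_ fun y hy => ?_
  · exact two_pos.trans_le (two_le_colVal hfirst x)
  · subst hy
    exact (hbefore y y.lt_succ_self).trans_le (htouch ▸ colVal_monotone σ y.le_succ)

include hfirst in
/-- Off the peaks of `ν` one has `cutPeaks ν = ν` and `ν` is flat, and `σ` cannot be just half
a unit above `ν`: that would be a diagonal step starting where `σ` is already above `ν`. -/
lemma IsLatticePath.colVal_cutPeaks_add_two_le {σ : List Step} {x : ℕ} (hx : x < eLen ν)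
    (habove : ∀ y ≤ x, colVal ν y < colVal σ y) :
    colVal (cutPeaks ν) x + 2 ≤ colVal σ x := by
  have hcut := colVal_cutPeaks_le_and_le ν x
  have hσx := habove x le_rfl
  by_contra hlt
  have hpeak : ¬ colVal (cutPeaks ν) x < colVal ν x := by omega
  have hodd : Odd (colVal σ x) := by
    obtain ⟨k, hk⟩ := hν.even_colVal x
    exact ⟨k, by omega⟩
  have hpos := two_le_colVal hfirst x
  rcases x with _ | y
  · exact hpeak (hν.colVal_cutPeaks_lt hx (by omega) (by simp))
  · have hflat : ¬ colVal ν y < colVal ν (y + 1) := fun h =>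
      hpeak (hν.colVal_cutPeaks_lt hx (by omega) fun z hz => by cases hz; exact h)
    have := colVal_lt_of_odd hodd
    have := habove y y.le_succ
    have := colVal_monotone ν y.le_succ
    omega

include hfirst hlast in
lemma IsLatticePath.exists_lowerAtTouch_of_isSmallSchroder {σ : List Step}
    (hσ : IsSmallSchroder ν σ) : ∃ π, LowerAtTouch ν σ π ∧ WeaklyAbove π (cutPeaks ν) := by
  obtain ⟨x₀, hx₀, htouch, hbefore⟩ := exists_first_touch hlast hσ
  obtain ⟨σ', rfl⟩ :=
    exists_eq_N_cons_of_two_le_colVal ((two_le_colVal hfirst 0).trans (hσ.2.2 0))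
  obtain ⟨μ₁, c, μ₂, rfl, rfl, hc⟩ :=
    exists_eq_append_cons_of_lt_eLen (p := σ') (x := x₀) (by simpa [← hσ.1] using hx₀)
  obtain rfl : c = Step.E := by
    cases c with
    | N => exact absurd rfl hc
    | E => rfl
    | D =>
      obtain ⟨k, hk⟩ := hν.even_colVal (eLen μ₁)
      simp [colVal_append_cons_eLen] at htouch
      omega
  have hraise := colVal_raise_eLen (μ₁ := μ₁) (μ₂ := μ₂)
  refine ⟨μ₁ ++ Step.D :: μ₂, ⟨μ₁, μ₂, rfl, rfl, htouch, hbefore, by omega, fun x hx => ?_⟩,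
    fun x => ?_⟩
  · exact colVal_raise_of_gt hx ▸ hσ.2.2 x
  · rcases lt_trichotomy x (eLen μ₁) with h | rfl | h
    · have := colVal_raise_of_lt (μ₂ := μ₂) h
      have := hν.colVal_cutPeaks_add_two_le hfirst (x := x) (by omega)
        fun y hy => hbefore y (by omega)
      omega
    · have := hν.colVal_cutPeaks_lt_of_touch hfirst hx₀ htouch hbefore
      omega
    · exact colVal_raise_of_gt h ▸ (colVal_cutPeaks_le_and_le ν x).1.trans (hσ.2.2 x)

lemma IsLatticePath.exists_lowerAtTouch_of_isLargeSchroder {π : List Step}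
    (hπ : IsLargeSchroder ν π) (hns : ¬ WeaklyAbove π ν) :
    ∃ σ, LowerAtTouch ν σ π ∧ WeaklyAbove σ ν := by
  obtain ⟨x₁, hx₁, hbelow, hafter⟩ := exists_last_below hπ.1 hπ.2.1 hns
  have hcut : ∀ x, colVal ν x ≤ colVal π x + 1 := fun x =>
    (colVal_cutPeaks_le_and_le ν x).2.trans (Nat.add_le_add_right (hπ.2.2 x) 1)
  obtain ⟨μ₁, c, μ₂, rfl, rfl, hc⟩ :=
    exists_eq_append_cons_of_lt_eLen (p := π) (x := x₁) (hπ.1 ▸ hx₁)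
  obtain rfl : c = Step.D := by
    cases c with
    | N => exact absurd rfl hc
    | E =>
      obtain ⟨k, hk⟩ := hν.even_colVal (eLen μ₁)
      have := hcut (eLen μ₁)
      simp [colVal_append_cons_eLen] at hbelow this
      omega
    | D => rfl
  have hraise := colVal_raise_eLen (μ₁ := μ₁) (μ₂ := μ₂)
  have hcut₁ := hcut (eLen μ₁)
  refine ⟨Step.N :: (μ₁ ++ Step.E :: μ₂), ⟨μ₁, μ₂, rfl, rfl, by omega, fun x hx => ?_, hbelow,
    hafter⟩, fun x => ?_⟩
  · have := colVal_raise_of_lt (μ₂ := μ₂) hx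
    have := hcut x
    omega
  · rcases lt_trichotomy x (eLen μ₁) with h | rfl | h
    · have := colVal_raise_of_lt (μ₂ := μ₂) h
      have := hcut x
      omega
    · omega
    · exact (colVal_raise_of_gt h).symm ▸ hafter x h

include hfirst hlast in
lemma IsLatticePath.card_large_not_weaklyAbove_succ (j : ℕ) :
    Nat.card {π // IsLargeSchroder ν π ∧ ¬ WeaklyAbove π ν ∧ π.count Step.D = j + 1}
      = schNum ν j := by
  refine (Nat.card_eq_of_biTotal_of_biUnique (R := fun σ π => LowerAtTouch ν σ.1 π.1)
    ⟨fun ⟨σ, hσ, hc⟩ => ?_, fun ⟨π, hπ, hns, hc⟩ => ?_⟩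
    ⟨fun _ _ _ h h' => Subtype.ext (LowerAtTouch.leftUnique ν h h'),
      fun _ _ _ h h' => Subtype.ext (LowerAtTouch.rightUnique ν h h')⟩).symm
  · obtain ⟨π, h, hW⟩ := hν.exists_lowerAtTouch_of_isSmallSchroder hfirst hlast hσ
    exact ⟨⟨π, ⟨h.eLen_eq.trans hσ.1, h.nLen_eq.trans hσ.2.1, hW⟩, h.not_weaklyAbove,
      by rw [h.count_D, hc]⟩, h⟩
  · obtain ⟨σ, h, hW⟩ := hν.exists_lowerAtTouch_of_isLargeSchroder hπ hns
    exact ⟨⟨σ, ⟨h.eLen_eq.symm.trans hπ.1, h.nLen_eq.symm.trans hπ.2.1, hW⟩,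
      by have := h.count_D; omega⟩, h⟩

lemma IsLatticePath.card_large_not_weaklyAbove_zero :
    Nat.card {π // IsLargeSchroder ν π ∧ ¬ WeaklyAbove π ν ∧ π.count Step.D = 0} = 0 := by
  refine Nat.card_eq_zero.2 (Or.inl ⟨fun ⟨π, hπ, hns, hc⟩ => ?_⟩)
  obtain ⟨σ, h, -⟩ := hν.exists_lowerAtTouch_of_isLargeSchroder hπ hns
  have := h.count_D
  omega

end LatticePath

lemma isSmallSchroder_iff {ν π : List Step} :
    IsSmallSchroder ν π ↔ IsLargeSchroder ν π ∧ WeaklyAbove π ν :=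
  ⟨fun h => ⟨⟨h.1, h.2.1, fun x => (colVal_cutPeaks_le_and_le ν x).1.trans (h.2.2 x)⟩, h.2.2⟩,
    fun ⟨h, hW⟩ => ⟨h.1, h.2.1, hW⟩⟩

lemma card_largeSchroder_eq_schNum_add (ν : List Step) (i : ℕ) :
    Nat.card {π // IsLargeSchroder ν π ∧ π.count Step.D = i}
      = schNum ν i
        + Nat.card {π // IsLargeSchroder ν π ∧ ¬ WeaklyAbove π ν ∧ π.count Step.D = i} := by
  rw [schNum, Nat.card_subtype_eq_card_and_add_card_and_not _ (fun π => WeaklyAbove π ν)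
    ((finite_setOf_eLen_nLen (eLen ν) (nLen ν)).subset fun π h => ⟨h.1.1, h.1.2.1⟩)]
  congr 1
  · exact Nat.card_congr (Equiv.subtypeEquivRight fun π => by rw [isSmallSchroder_iff]; tauto)
  · exact Nat.card_congr (Equiv.subtypeEquivRight fun π => by tauto)

theorem IsLatticePath.card_largeSchroder {ν : List Step} (hν : IsLatticePath ν)
    (hfirst : ν.head? = some Step.N) (hlast : ν.getLast? = some Step.E) (i : ℕ) :
    Nat.card {π // IsLargeSchroder ν π ∧ π.count Step.D = i}
      = schNum ν i + (if i = 0 then 0 else schNum ν (i - 1)) := by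
  rw [card_largeSchroder_eq_schNum_add]
  rcases i with _ | j
  · simp [hν.card_large_not_weaklyAbove_zero]
  · simp [hν.card_large_not_weaklyAbove_succ hfirst hlast j]

lemma isLatticePath_nuAB (a b : ℕ) : IsLatticePath (nuAB a b) := by
  simp [IsLatticePath, nuAB, List.mem_replicate]

lemma head?_nuAB {a b : ℕ} (ha : 0 < a) (hb : 0 < b) : (nuAB a b).head? = some Step.N := by
  obtain ⟨n, rfl⟩ := Nat.exists_eq_add_one_of_ne_zero hb.ne'
  have hpos : 0 < (a + n) / (n + 1) := Nat.div_pos (by omega) (by omega)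
  have h0 : n / (n + 1) = 0 := Nat.div_eq_of_lt (by omega)
  rw [nuAB, List.range_succ_eq_map, List.flatMap_cons]
  obtain ⟨k, hk⟩ := Nat.exists_eq_add_one_of_ne_zero hpos.ne'
  simp [h0, hk, List.replicate_succ]

lemma getLast?_nuAB {a b : ℕ} (hb : 0 < b) : (nuAB a b).getLast? = some Step.E := by
  obtain ⟨n, rfl⟩ := Nat.exists_eq_add_one_of_ne_zero hb.ne'
  rw [nuAB, List.range_succ, List.flatMap_append]
  simp

theorem largeCount_eq_smallCount_add_general (a b i : ℕ) (ha : 0 < a) (hb : 0 < b) :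
    largeCount a b i
      = smallCount a b i + (if i = 0 then 0 else smallCount a b (i - 1)) :=
  (isLatticePath_nuAB a b).card_largeSchroder (head?_nuAB ha hb) (getLast?_nuAB hb) i

/-- For coprime positive `a, b` and `0 ≤ i ≤ a`,
`Sch(a,b,i) = sch(a,b,i) + sch(a,b,i−1)`, with `sch(a,b,−1) = 0`. -/
theorem largeCount_eq_smallCount_add (a b i : ℕ) (ha : 0 < a) (hb : 0 < b)
    (hco : Nat.Coprime a b) (hi : i ≤ a) :
    largeCount a b i
      = smallCount a b i + (if i = 0 then 0 else smallCount a b (i - 1)) :=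
  largeCount_eq_smallCount_add_general a b i ha hb
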